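/- arXiv:1709.08916 — 6 statements merged into one kernel-verified Lean document; each statement's English description precedes it below -/
import Mathlib

section
/- If M is a finitely generated monoid and A is a finite M-act, then A is finitely presented. -/
/-- A right act of a monoid `M` on a type `A`. -/
structure RActOn (M : Type*) [Monoid M] (A : Type*) where
  act : A → M → A
  act_one : ∀ a, act a 1 = a
  act_mul : ∀ a m n, act a (m * n) = act (act a m) n

namespace RActOn

variable {M : Type*} [Monoid M]

/-- `f` is a homomorphism of `M`-acts. -/
def IsHom {A B : Type*} (α : RActOn M A) (β : RActOn M B) (f : A → B) : Prop :=
  ∀ a m, f (α.act a m) = β.act (f a) m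

/-- The two acts are isomorphic. -/
def Isomorphic {A B : Type*} (α : RActOn M A) (β : RActOn M B) : Prop :=
  ∃ f : A → B, IsHom α β f ∧ Function.Bijective f

/-- `ρ` is an `M`-act congruence on `A`. -/
def IsCong {A : Type*} (α : RActOn M A) (ρ : A → A → Prop) : Prop :=
  Equivalence ρ ∧ ∀ a b m, ρ a b → ρ (α.act a m) (α.act b m)

/-- The smallest congruence containing the relation `X`. -/
def congClosure {A : Type*} (α : RActOn M A) (X : A → A → Prop) : A → A → Prop :=
  fun a b => ∀ ρ : A → A → Prop, IsCong α ρ → (∀ x y, X x y → ρ x y) → ρ a b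

/-- The free `M`-act on a set `X`: carrier `X × M`, action `(x, m) · n = (x, m * n)`. -/
def free (M : Type*) [Monoid M] (X : Type*) : RActOn M (X × M) where
  act p n := (p.1, p.2 * n)
  act_one := by intro a; simp
  act_mul := by intro a m n; simp [mul_assoc]

/-- The `M`-act `α` is defined by the presentation `⟨X | R⟩`. -/
def DefinedBy {A : Type*} (α : RActOn M A) (X : Type*)
    (R : Set ((X × M) × (X × M))) : Prop :=
  ∃ f : X × M → A, Function.Surjective f ∧ IsHom (free M X) α f ∧
    ∀ u v : X × M, f u = f v ↔ congClosure (free M X) (fun a b => (a, b) ∈ R) u v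

/-- The `M`-act `α` is finitely presented. -/
def FinitelyPresented {A : Type*} (α : RActOn M A) : Prop :=
  ∃ (X : Type) (_ : Finite X) (R : Set ((X × M) × (X × M))),
    R.Finite ∧ DefinedBy α X R

/-- The `M`-act `α` is finitely generated. -/
def FinitelyGenerated {A : Type*} (α : RActOn M A) : Prop :=
  ∃ U : Set A, U.Finite ∧ ∀ a : A, ∃ u ∈ U, ∃ m : M, α.act u m = a

/-- `B` is a subact of `A`. -/
def IsSubact {A : Type*} (α : RActOn M A) (B : Set A) : Prop :=
  ∀ b ∈ B, ∀ m : M, α.act b m ∈ B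

/-- The subset `S` is generated, as a subact, by `U ⊆ S`. -/
def FGSet {A : Type*} (α : RActOn M A) (S : Set A) : Prop :=
  ∃ U ⊆ S, U.Finite ∧ ∀ a ∈ S, ∃ u ∈ U, ∃ m : M, α.act u m = a

/-- The act induced on a subact. -/
def subAct {A : Type*} (α : RActOn M A) (B : Set A) (hB : IsSubact α B) :
    RActOn M B where
  act b m := ⟨α.act b m, hB b b.2 m⟩
  act_one := by intro a; ext; simp [α.act_one]
  act_mul := by intro a m n; ext; simp [α.act_mul]

/-- The Rees congruence relation determined by `B`. -/
def reesRel {A : Type*} (B : Set A) : A → A → Prop :=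
  fun a b => a = b ∨ (a ∈ B ∧ b ∈ B)

/-- The Rees quotient act `A / B`. -/
def reesAct {A : Type*} (α : RActOn M A) (B : Set A) (hB : IsSubact α B) :
    RActOn M (Quot (reesRel B)) where
  act q m := Quot.lift (fun a => Quot.mk _ (α.act a m))
    (by
      intro a b h
      apply Quot.sound
      rcases h with h | ⟨ha, hb⟩
      · exact Or.inl (by rw [h])
      · exact Or.inr ⟨hB a ha m, hB b hb m⟩) q
  act_one := by
    intro q
    induction q using Quot.ind with
    | _ a => simp [α.act_one]
  act_mul := by
    intro q m n
    induction q using Quot.ind with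
    | _ a => simp [α.act_mul]

/-- The trivial one-element `M`-act. -/
def trivAct (M : Type*) [Monoid M] : RActOn M PUnit where
  act _ _ := PUnit.unit
  act_one := by intro a; rfl
  act_mul := by intro a m n; rfl

/-- The disjoint union of two `M`-acts. -/
def sumAct {A B : Type*} (α : RActOn M A) (β : RActOn M B) : RActOn M (A ⊕ B) where
  act x m := Sum.elim (fun a => Sum.inl (α.act a m)) (fun b => Sum.inr (β.act b m)) x
  act_one := by intro x; cases x <;> simp [α.act_one, β.act_one]
  act_mul := by intro x m n; cases x <;> simp [α.act_mul, β.act_mul]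

/-- The `M`-act `M` itself, by right multiplication. -/
def selfAct (M : Type*) [Monoid M] : RActOn M M where
  act a m := a * m
  act_one := by intro a; simp
  act_mul := by intro a m n; simp [mul_assoc]

end RActOn



/-!
Take every element of `A` as a generator and, for each generator `x` and each monoid generator
`z` from a finite generating set `Z`, the relation `x · z = (x · z as a generator) · 1`. Writing an
arbitrary `m` as a product of elements of `Z` and applying these relations one letter at a time
rewrites every `x · m` to the normal form `(x · m) · 1`, so two words are congruent exactly when
they evaluate to the same element of `A`. There are `|A| · |Z|` relations.
-/

namespace RActOn

variable {M : Type*} [Monoid M]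

section Congruence

variable {A : Type*} (α : RActOn M A)

theorem congClosure_isCong (X : A → A → Prop) : IsCong α (congClosure α X) :=
  ⟨⟨fun a _ hρ _ => hρ.1.refl a,
    fun h ρ hρ hX => hρ.1.symm (h ρ hρ hX),
    fun h₁ h₂ ρ hρ hX => hρ.1.trans (h₁ ρ hρ hX) (h₂ ρ hρ hX)⟩,
   fun a b m h ρ hρ hX => hρ.2 a b m (h ρ hρ hX)⟩

theorem congClosure_of_rel {X : A → A → Prop} {a b : A} (h : X a b) : congClosure α X a b :=
  fun _ _ hX => hX a b h

theorem IsHom.isCong_ker {B : Type*} {β : RActOn M B} {f : A → B} (hf : IsHom α β f) :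
    IsCong α (fun a b => f a = f b) :=
  ⟨⟨fun _ => rfl, Eq.symm, Eq.trans⟩, fun a b m h => by dsimp only at h ⊢; rw [hf a m, hf b m, h]⟩

end Congruence

theorem definedBy_of_normalForm {A X : Type*} (α : RActOn M A) (R : Set ((X × M) × (X × M)))
    (f : X × M → A) (hsurj : Function.Surjective f) (hf : IsHom (free M X) α f)
    (hR : ∀ u v, (u, v) ∈ R → f u = f v) (nf : A → X × M)
    (hnf : ∀ u, congClosure (free M X) (fun a b => (a, b) ∈ R) u (nf (f u))) :
    DefinedBy α X R := by
  refine ⟨f, hsurj, hf, fun u v => ⟨fun huv => ?_, fun h => h _ hf.isCong_ker hR⟩⟩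
  have hC := (congClosure_isCong (free M X) (fun a b => (a, b) ∈ R)).1
  exact hC.trans (hnf u) (huv ▸ hC.symm (hnf v))

section Cayley

variable {A X : Type*} (α : RActOn M A) (e : X ≃ A)

def eval (p : X × M) : A :=
  α.act (e p.1) p.2

def cayleyRel (Z : Set M) : Set ((X × M) × (X × M)) :=
  Set.image2 (fun x z => ((x, z), (e.symm (α.act (e x) z), 1))) Set.univ Z

theorem eval_surjective : Function.Surjective (eval α e) :=
  fun a => ⟨(e.symm a, 1), by simp [eval, α.act_one]⟩

theorem isHom_eval : IsHom (free M X) α (eval α e) :=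
  fun p m => α.act_mul (e p.1) p.2 m

theorem eval_eq_of_mem_cayleyRel {Z : Set M} {u v : X × M} (h : (u, v) ∈ cayleyRel α e Z) :
    eval α e u = eval α e v := by
  obtain ⟨x, -, z, -, h⟩ := h
  obtain ⟨rfl, rfl⟩ := Prod.mk.inj h
  simp [eval, α.act_one]

theorem congClosure_cayleyRel_normalForm {Z : Set M} (hZ : Submonoid.closure Z = ⊤) (m : M)
    (x : X) :
    congClosure (free M X) (fun a b => (a, b) ∈ cayleyRel α e Z) (x, m)
      (e.symm (α.act (e x) m), 1) := by
  have hC := congClosure_isCong (free M X) (fun a b => (a, b) ∈ cayleyRel α e Z)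
  induction (hZ ▸ Submonoid.mem_top m : m ∈ Submonoid.closure Z) using
      Submonoid.closure_induction generalizing x with
  | mem z hz => exact congClosure_of_rel _ ⟨x, trivial, z, hz, rfl⟩
  | one => simpa [α.act_one] using hC.1.refl (x, 1)
  | mul m₁ m₂ _ _ ih₁ ih₂ =>
    have h₁ := hC.2 _ _ m₂ (ih₁ x)
    have h₂ := ih₂ (e.symm (α.act (e x) m₁))
    simp only [free, one_mul, Equiv.apply_symm_apply, ← α.act_mul] at h₁ h₂
    exact hC.1.trans h₁ h₂

theorem definedBy_cayleyRel {Z : Set M} (hZ : Submonoid.closure Z = ⊤) :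
    DefinedBy α X (cayleyRel α e Z) :=
  definedBy_of_normalForm α _ (eval α e) (eval_surjective α e) (isHom_eval α e)
    (fun _ _ => eval_eq_of_mem_cayleyRel α e) (fun a => (e.symm a, 1))
    (fun u => by simpa [eval, α.act_one] using congClosure_cayleyRel_normalForm α e hZ u.2 u.1)

end Cayley

end RActOn

open RActOn in
/-- If `M` is a finitely generated monoid and `A` is a finite `M`-act,
then `A` is finitely presented. -/
theorem finite_act_finitely_presented {M : Type*} [Monoid M]
    (hM : ∃ Z : Set M, Z.Finite ∧ Submonoid.closure Z = ⊤)
    {A : Type*} [Finite A] (α : RActOn M A) :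
    FinitelyPresented α := by
  obtain ⟨Z, hZfin, hZ⟩ := hM
  -- the generators of a presentation live in `Type`, so `A` is relabelled by `Fin n`
  obtain ⟨n, ⟨e⟩⟩ := Finite.exists_equiv_fin A
  exact ⟨Fin n, inferInstance, cayleyRel α e.symm Z,
    Set.finite_univ.image2 _ hZfin, definedBy_cayleyRel α e.symm hZ⟩
end

section
/- Let M = X* be the free monoid on an infinite set X. Then the trivial M-act {0} is not finitely presented. -/
namespace RActOn

variable {M : Type*} [Monoid M]

theorem isCong_free_ker_monoidHom {N : Type*} [Monoid N] (Y : Type*) (φ : M →* N) :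
    IsCong (free M Y) (fun p q => φ p.2 = φ q.2) :=
  ⟨⟨fun _ => rfl, Eq.symm, Eq.trans⟩, fun _ _ _ h => by simp only [free, map_mul, h]⟩

theorem DefinedBy.monoidHom_eq_one_of_trivAct {N : Type*} [Monoid N] {Y : Type*}
    {R : Set ((Y × M) × (Y × M))} (hR : DefinedBy (trivAct M) Y R) (φ : M →* N)
    (hφ : ∀ r ∈ R, φ r.1.2 = φ r.2.2) (m : M) : φ m = 1 := by
  obtain ⟨f, hsurj, -, hker⟩ := hR
  obtain ⟨⟨y, -⟩, -⟩ := hsurj PUnit.unit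
  have hcong : congClosure (free M Y) (fun a b => (a, b) ∈ R) (y, m) (y, 1) :=
    (hker _ _).mp rfl
  simpa using hcong _ (isCong_free_ker_monoidHom Y φ) fun a b hab => hφ (a, b) hab

end RActOn

theorem FreeMonoid.count_eq_one_of_notMem {X : Type*} [DecidableEq X] {x : X}
    {w : FreeMonoid X} (hx : x ∉ w) : count x w = 1 := by
  simp only [count, countP_apply, ofAdd_eq_one, List.countP_eq_zero, decide_eq_true_eq]
  exact fun a ha hax => hx (hax ▸ ha)

open RActOn in
/-- If `M` is the free monoid on an infinite set `X`, then the trivial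
`M`-act is not finitely presented. -/
theorem trivial_act_not_fp_free_monoid {X : Type*} [Infinite X] :
    ¬ FinitelyPresented (trivAct (FreeMonoid X)) := by
  classical
  rintro ⟨Y, -, R, hRfin, hR⟩
  have hletters : (⋃ r ∈ R, (↑(r.1.2.symbols ∪ r.2.2.symbols) : Set X)).Finite :=
    hRfin.biUnion fun r _ => Finset.finite_toSet _
  obtain ⟨x, hx⟩ := hletters.infinite_compl.nonempty
  have hfresh : ∀ r ∈ R, x ∉ r.1.2 ∧ x ∉ r.2.2 := fun r hr => by
    simpa [not_or] using fun h => hx (Set.mem_biUnion hr h)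
  have hcount := hR.monoidHom_eq_one_of_trivAct (FreeMonoid.count x)
    (fun r hr => by
      rw [FreeMonoid.count_eq_one_of_notMem (hfresh r hr).1,
        FreeMonoid.count_eq_one_of_notMem (hfresh r hr).2])
    (FreeMonoid.of x)
  simp [FreeMonoid.count_of] at hcount
end

section
/- Let M be a monoid and C = A ∪ B an M-act with A and B subacts such that A ∩ B is either empty or finitely generated. If C is finitely generated, then both A and B are finitely generated. -/
namespace RActOn

variable {M : Type*} [Monoid M] {C : Type*} (γ : RActOn M C)

theorem fgSet_empty : FGSet γ ∅ :=
  ⟨∅, subset_rfl, Set.finite_empty, fun _ ha => ha.elim⟩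

/-- An element of `S` reached from a generator outside `S` lies in the subact `T`, hence in
`S ∩ T`; so the generators of `C` lying in `S`, together with those of `S ∩ T`, generate `S`. -/
theorem fgSet_of_union_eq_univ {S T : Set C} (hT : IsSubact γ T) (hST : S ∪ T = Set.univ)
    (hint : FGSet γ (S ∩ T)) (hC : FinitelyGenerated γ) : FGSet γ S := by
  obtain ⟨U, hUfin, hUgen⟩ := hC
  obtain ⟨V, hVsub, hVfin, hVgen⟩ := hint
  refine ⟨U ∩ S ∪ V, Set.union_subset Set.inter_subset_right (hVsub.trans Set.inter_subset_left),
    (hUfin.inter_of_left S).union hVfin, fun a ha => ?_⟩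
  obtain ⟨u, huU, m, rfl⟩ := hUgen a
  by_cases huS : u ∈ S
  · exact ⟨u, Or.inl ⟨huU, huS⟩, m, rfl⟩
  · have huT : u ∈ T := (Set.eq_univ_iff_forall.mp hST u).resolve_left huS
    obtain ⟨v, hv, n, hn⟩ := hVgen _ ⟨ha, hT u huT m⟩
    exact ⟨v, Or.inr hv, n, hn⟩

end RActOn

open RActOn in
/-- If `C = A ∪ B` with `A ∩ B` empty or finitely generated, and `C` is finitely
generated, then both `A` and `B` are finitely generated. -/
theorem components_fg_of_union_fg {M : Type*} [Monoid M] {C : Type*} (γ : RActOn M C)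
    (A B : Set C) (hA : IsSubact γ A) (hB : IsSubact γ B)
    (hunion : A ∪ B = Set.univ)
    (hint : A ∩ B = ∅ ∨ FGSet γ (A ∩ B))
    (hC : FinitelyGenerated γ) :
    FGSet γ A ∧ FGSet γ B := by
  have hint : FGSet γ (A ∩ B) := hint.elim (fun h => h ▸ fgSet_empty γ) id
  exact ⟨fgSet_of_union_eq_univ γ hB hunion hint hC,
    fgSet_of_union_eq_univ γ hA (Set.union_comm A B ▸ hunion) (Set.inter_comm A B ▸ hint) hC⟩
end

section
/- Let M be a monoid and C = A ∪ B an M-act with A, B subacts and A ∩ B nonempty. If C is finitely presented and A and B are finitely generated, then A ∩ B is a finitely generated M-act. -/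
/-
Adjoin the finitely many generators of `A` and of `B` to a finite presentation `⟨X | R⟩` of `C`
(a Tietze transformation: each new generator is related to a word representing it). For
`c ∈ A ∩ B`, write `c = u·m = v·n` with `u` a generator of `A` and `v` one of `B`; the words
`u·m` and `v·n` are joined by a chain of elementary steps `p·t ↔ q·t` with `(p, q)` a defining
relation. The generator of the first word lies in `A`, that of the last in `B`, and as
`A ∪ B = C` there is a first step `p·t ↔ q·t` where the generator leaves `A` and lies in `B`.
Then `p` and `q` represent the same element, which lies in `A ∩ B`, and `c` is that element
times `t`. So `A ∩ B` is generated by the finitely many generators and sides of relations that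
lie in `A ∩ B`.
-/

open Relation

namespace RActOn

universe u

variable {M : Type*} [Monoid M] {X : Type*}

theorem IsHom.comp {A B C : Type*} {α : RActOn M A} {β : RActOn M B} {γ : RActOn M C}
    {g : B → C} {f : A → B} (hg : IsHom β γ g) (hf : IsHom α β f) : IsHom α γ (g ∘ f) :=
  fun a m => by simp only [Function.comp, hf a m, hg (f a) m]

theorem IsHom.apply_free {A : Type*} {α : RActOn M A} {f : X × M → A}
    (hf : IsHom (free M X) α f) (x : X) (m : M) : f (x, m) = α.act (f (x, 1)) m := by
  rw [← hf]
  simp [free]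

section ElementaryStep

def ElementaryStep (R : Set ((X × M) × (X × M))) (u v : X × M) : Prop :=
  ∃ p q t, ((p, q) ∈ R ∨ (q, p) ∈ R) ∧ u = (free M X).act p t ∧ v = (free M X).act q t

variable {R : Set ((X × M) × (X × M))}

theorem ElementaryStep.symm {u v : X × M} (h : ElementaryStep R u v) : ElementaryStep R v u := by
  obtain ⟨p, q, t, hpq, rfl, rfl⟩ := h
  exact ⟨q, p, t, hpq.symm, rfl, rfl⟩

instance : Std.Symm (ElementaryStep R) := ⟨fun _ _ h => h.symm⟩

theorem ElementaryStep.act {u v : X × M} (h : ElementaryStep R u v) (m : M) :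
    ElementaryStep R ((free M X).act u m) ((free M X).act v m) := by
  obtain ⟨p, q, t, hpq, rfl, rfl⟩ := h
  exact ⟨p, q, t * m, hpq, ((free M X).act_mul ..).symm, ((free M X).act_mul ..).symm⟩

theorem elementaryStep_of_mem {p q : X × M} (h : (p, q) ∈ R) : ElementaryStep R p q :=
  ⟨p, q, 1, Or.inl h, ((free M X).act_one p).symm, ((free M X).act_one q).symm⟩

theorem isCong_reflTransGen_elementaryStep :
    IsCong (free M X) (ReflTransGen (ElementaryStep R)) :=
  ⟨⟨fun _ => .refl, fun h => Std.Symm.symm _ _ h, .trans⟩,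
    fun _ _ m h => h.lift _ fun _ _ hs => hs.act m⟩

theorem reflTransGen_of_congClosure {u v : X × M}
    (h : congClosure (free M X) (fun a b => (a, b) ∈ R) u v) :
    ReflTransGen (ElementaryStep R) u v :=
  h _ isCong_reflTransGen_elementaryStep fun _ _ hxy => .single (elementaryStep_of_mem hxy)

theorem IsHom.apply_eq_of_reflTransGen {A : Type*} {α : RActOn M A} {f : X × M → A}
    (hf : IsHom (free M X) α f) (hR : ∀ p q, (p, q) ∈ R → f p = f q) {u v : X × M}
    (h : ReflTransGen (ElementaryStep R) u v) : f u = f v := by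
  induction h with
  | refl => rfl
  | tail _ hs ih =>
    obtain ⟨p, q, t, hpq, rfl, rfl⟩ := hs
    rw [ih, hf, hf]
    rcases hpq with h | h
    · rw [hR p q h]
    · rw [hR q p h]

end ElementaryStep

section Presentation

variable {A : Type*} {α : RActOn M A}

structure IsPresentation (α : RActOn M A) (f : X × M → A) (R : Set ((X × M) × (X × M))) :
    Prop where
  surjective : Function.Surjective f
  isHom : IsHom (free M X) α f
  eq_iff : ∀ u v, f u = f v ↔ ReflTransGen (ElementaryStep R) u v

variable {f : X × M → A} {R : Set ((X × M) × (X × M))}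

theorem DefinedBy.exists_isPresentation (h : DefinedBy α X R) : ∃ f, IsPresentation α f R := by
  obtain ⟨f, hsurj, hhom, hker⟩ := h
  refine ⟨f, hsurj, hhom, fun u v => ⟨fun huv => reflTransGen_of_congClosure ((hker u v).1 huv),
    hhom.apply_eq_of_reflTransGen fun p q hpq => (hker p q).2 fun _ _ hR => hR _ _ hpq⟩⟩

theorem IsPresentation.apply_eq_of_mem (hf : IsPresentation α f R) {p q : X × M}
    (h : (p, q) ∈ R) : f p = f q :=
  (hf.eq_iff p q).2 (.single (elementaryStep_of_mem h))

variable {Y : Type*}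

def inlFree : X × M → (X ⊕ Y) × M := Prod.map Sum.inl id

def substFree (z : Y → X × M) (w : (X ⊕ Y) × M) : X × M :=
  (free M X).act (Sum.elim (fun x => (x, 1)) z w.1) w.2

def adjoinRel (R : Set ((X × M) × (X × M))) (z : Y → X × M) :
    Set (((X ⊕ Y) × M) × ((X ⊕ Y) × M)) :=
  Prod.map inlFree inlFree '' R ∪ Set.range fun y => ((Sum.inr y, 1), inlFree (z y))

variable {z : Y → X × M}

theorem isHom_substFree : IsHom (free M (X ⊕ Y)) (free M X) (substFree z) :=
  fun w n => (free M X).act_mul _ w.2 n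

@[simp]
theorem substFree_inlFree (w : X × M) : substFree z (inlFree w) = w := by
  simp [substFree, inlFree, free]

theorem adjoinRel_finite [Finite Y] (hR : R.Finite) : (adjoinRel R z).Finite :=
  (hR.image _).union (Set.finite_range _)

theorem ElementaryStep.map_inlFree {u v : X × M} (h : ElementaryStep R u v) :
    ElementaryStep (adjoinRel R z) (inlFree u) (inlFree v) := by
  obtain ⟨p, q, t, hpq, rfl, rfl⟩ := h
  refine ⟨inlFree p, inlFree q, t, ?_, rfl, rfl⟩
  exact hpq.imp (fun h => Or.inl ⟨_, h, rfl⟩) fun h => Or.inl ⟨_, h, rfl⟩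

theorem reflTransGen_inlFree_substFree (w : (X ⊕ Y) × M) :
    ReflTransGen (ElementaryStep (adjoinRel R z)) w (inlFree (substFree z w)) := by
  obtain ⟨x | y, m⟩ := w
  · convert ReflTransGen.refl <;> simp [substFree, inlFree, free]
  · refine .single ⟨(Sum.inr y, 1), inlFree (z y), m, Or.inl (Or.inr ⟨y, rfl⟩), ?_, rfl⟩
    simp [free]

theorem IsPresentation.adjoin (hf : IsPresentation α f R) (z : Y → X × M) :
    IsPresentation α (f ∘ substFree z) (adjoinRel R z) where
  surjective a := by
    obtain ⟨w, rfl⟩ := hf.surjective a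
    exact ⟨inlFree w, by simp⟩
  isHom := hf.isHom.comp isHom_substFree
  eq_iff u v := by
    refine ⟨fun h => ?_, (hf.isHom.comp isHom_substFree).apply_eq_of_reflTransGen ?_⟩
    · have hR := ((hf.eq_iff _ _).1 h).lift inlFree fun _ _ hs => hs.map_inlFree (z := z)
      exact (reflTransGen_inlFree_substFree u).trans
        (hR.trans (Std.Symm.symm _ _ (reflTransGen_inlFree_substFree v)))
    · rintro p q (⟨⟨p, q⟩, h, hpq⟩ | ⟨y, hy⟩)
      · simp only [Prod.map, Prod.mk.injEq] at hpq
        obtain ⟨rfl, rfl⟩ := hpq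
        simpa using hf.apply_eq_of_mem h
      · simp only [Prod.mk.injEq] at hy
        obtain ⟨rfl, rfl⟩ := hy
        simp [substFree, inlFree, free]

theorem FinitelyPresented.exists_isPresentation_of_finite {A : Type u} {α : RActOn M A}
    (hα : FinitelyPresented α) {S : Set A} (hS : S.Finite) :
    ∃ (Z : Type u) (f : Z × M → A) (R : Set ((Z × M) × (Z × M))),
      Finite Z ∧ R.Finite ∧ IsPresentation α f R ∧ ∀ a ∈ S, ∃ z, f (z, 1) = a := by
  obtain ⟨X, _, R, hR, hdef⟩ := hα
  obtain ⟨f, hf⟩ := hdef.exists_isPresentation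
  choose z hz using fun a : S => hf.surjective a
  have := hS.to_subtype
  refine ⟨X ⊕ S, _, _, inferInstance, adjoinRel_finite hR, hf.adjoin z,
    fun a ha => ⟨Sum.inr ⟨a, ha⟩, ?_⟩⟩
  simp [substFree, free, hz]

end Presentation

section Crossing

variable {C : Type*} {γ : RActOn M C} {A B : Set C} {f : X × M → C}
  {R : Set ((X × M) × (X × M))}

def crossingSet (f : X × M → C) (R : Set ((X × M) × (X × M))) (A B : Set C) : Set C :=
  A ∩ B ∩ (Set.range (fun x => f (x, 1)) ∪ (fun pq => f pq.1) '' R)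

theorem crossingSet_finite [Finite X] (hR : R.Finite) : (crossingSet f R A B).Finite :=
  ((Set.finite_range _).union (hR.image _)).inter_of_right _

theorem IsSubact.apply_free_mem (hA : IsSubact γ A) (hf : IsHom (free M X) γ f) {x : X}
    (hx : f (x, 1) ∈ A) (m : M) : f (x, m) ∈ A :=
  hf.apply_free x m ▸ hA _ hx m

theorem exists_act_mem_crossingSet_of_reflTransGen (hf : IsHom (free M X) γ f)
    (hR : ∀ p q, (p, q) ∈ R → f p = f q) (hA : IsSubact γ A) (hB : IsSubact γ B)
    (hAB : A ∪ B = Set.univ) {w w' : X × M} (h : ReflTransGen (ElementaryStep R) w w')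
    (hw : f (w.1, 1) ∈ A) (hw' : f (w'.1, 1) ∈ B) :
    ∃ g ∈ crossingSet f R A B, ∃ t, γ.act g t = f w := by
  induction h using ReflTransGen.head_induction_on with
  | refl => exact ⟨f (w'.1, 1), ⟨⟨hw, hw'⟩, Or.inl ⟨_, rfl⟩⟩, w'.2, (hf.apply_free ..).symm⟩
  | @head a b hs _ ih =>
    by_cases hbA : f (b.1, 1) ∈ A
    · rw [hf.apply_eq_of_reflTransGen hR (.single hs)]
      exact ih hbA
    have hbB : f (b.1, 1) ∈ B := (hAB ▸ Set.mem_univ _ : _ ∈ A ∪ B).resolve_left hbA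
    obtain ⟨p, q, t, hpq, rfl, rfl⟩ := hs
    have hfpq : f p = f q := hpq.elim (hR p q) fun h => (hR q p h).symm
    refine ⟨f p, ⟨⟨hA.apply_free_mem hf hw p.2, hfpq ▸ hB.apply_free_mem hf hbB q.2⟩, Or.inr ?_⟩,
      t, (hf p t).symm⟩
    exact hpq.elim (fun h => ⟨_, h, rfl⟩) fun h => ⟨_, h, hfpq.symm⟩

end Crossing

end RActOn

open RActOn in
theorem intersection_fg_general {M : Type*} [Monoid M] {C : Type*} (γ : RActOn M C)
    (A B : Set C) (hA : IsSubact γ A) (hB : IsSubact γ B)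
    (hunion : A ∪ B = Set.univ)
    (hC : FinitelyPresented γ) (hAfg : FGSet γ A) (hBfg : FGSet γ B) :
    FGSet γ (A ∩ B) := by
  obtain ⟨U, hUA, hUfin, hUgen⟩ := hAfg
  obtain ⟨V, hVB, hVfin, hVgen⟩ := hBfg
  obtain ⟨X, f, R, _, hRfin, hf, hgen⟩ := hC.exists_isPresentation_of_finite (hUfin.union hVfin)
  refine ⟨crossingSet f R A B, Set.inter_subset_left, crossingSet_finite hRfin, fun c hc => ?_⟩
  obtain ⟨u, hu, m, rfl⟩ := hUgen c hc.1
  obtain ⟨v, hv, n, hvn⟩ := hVgen _ hc.2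
  obtain ⟨x, hx⟩ := hgen u (Or.inl hu)
  obtain ⟨y, hy⟩ := hgen v (Or.inr hv)
  have hxy : f (x, m) = f (y, n) := by
    rw [hf.isHom.apply_free, hf.isHom.apply_free y, hx, hy, hvn]
  have hfx : f (x, m) = γ.act u m := by rw [hf.isHom.apply_free, hx]
  rw [← hfx]
  exact exists_act_mem_crossingSet_of_reflTransGen hf.isHom (fun _ _ => hf.apply_eq_of_mem) hA hB
    hunion ((hf.eq_iff _ _).1 hxy) (hx ▸ hUA hu) (hy ▸ hVB hv)

open RActOn in
/-- If `C = A ∪ B` is finitely presented with `A`, `B` finitely generated subacts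
and `A ∩ B` nonempty, then `A ∩ B` is finitely generated. -/
theorem intersection_fg {M : Type*} [Monoid M] {C : Type*} (γ : RActOn M C)
    (A B : Set C) (hA : IsSubact γ A) (hB : IsSubact γ B)
    (hunion : A ∪ B = Set.univ) (hint : (A ∩ B).Nonempty)
    (hC : FinitelyPresented γ) (hAfg : FGSet γ A) (hBfg : FGSet γ B) :
    FGSet γ (A ∩ B) :=
  intersection_fg_general γ A B hA hB hunion hC hAfg hBfg
end

section
/- Let M be a monoid generated by a set Z, let A be an M-act generated by a set X, and let B be a subact of A. Define S = {am : a ∈ A \ B, m ∈ Z, am ∈ B}. Then B is generated as an M-act by (X ∩ B) ∪ S. -/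
namespace RActOn

variable {M : Type*} [Monoid M] {A : Type*}

def entrySet (α : RActOn M A) (Z : Set M) (B : Set A) : Set A :=
  {c | c ∈ B ∧ ∃ a ∉ B, ∃ m ∈ Z, α.act a m = c}

/-- Writing `m = z₁ ⋯ zₖ` with `zᵢ ∈ Z`, the walk `a, a z₁, a z₁ z₂, …` must enter `B` at some
first step, and the point where it does lies in `entrySet`. -/
theorem exists_entrySet_act_eq {α : RActOn M A} {Z : Set M} {B : Set A} {m : M}
    (hm : m ∈ Submonoid.closure Z) :
    ∀ a ∉ B, α.act a m ∈ B → ∃ c ∈ entrySet α Z B, ∃ n : M, α.act c n = α.act a m := by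
  induction hm using Submonoid.closure_induction_left with
  | one =>
    intro a ha hmem
    rw [α.act_one] at hmem
    exact absurd hmem ha
  | mul_left z hz m _ ih =>
    intro a ha hmem
    rw [α.act_mul] at hmem ⊢
    by_cases hzB : α.act a z ∈ B
    · exact ⟨α.act a z, ⟨hzB, a, ha, z, hz, rfl⟩, m, rfl⟩
    · exact ih _ hzB hmem

end RActOn

open RActOn in
theorem subact_generating_set_general {M : Type*} [Monoid M] {A : Type*} (α : RActOn M A)
    (Z : Set M) (hZ : Submonoid.closure Z = ⊤)
    (X : Set A) (hX : ∀ a : A, ∃ x ∈ X, ∃ m : M, α.act x m = a)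
    (B : Set A) :
    ∀ b ∈ B, ∃ u ∈ (X ∩ B) ∪ {c | c ∈ B ∧ ∃ a ∉ B, ∃ m ∈ Z, α.act a m = c},
      ∃ m : M, α.act u m = b := by
  intro b hb
  obtain ⟨x, hx, m, rfl⟩ := hX b
  by_cases hxB : x ∈ B
  · exact ⟨x, Or.inl ⟨hx, hxB⟩, m, rfl⟩
  · have hm : m ∈ Submonoid.closure Z := hZ ▸ Submonoid.mem_top m
    obtain ⟨c, hc, n, hn⟩ := exists_entrySet_act_eq hm x hxB hb
    exact ⟨c, Or.inr hc, n, hn⟩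

open RActOn in
/-- If `Z` generates `M`, `X` generates `A` and `B` is a subact of `A`, then `B` is
generated by `(X ∩ B) ∪ S` where `S = {am ∈ B : a ∈ A \\ B, m ∈ Z}`. -/
theorem subact_generating_set {M : Type*} [Monoid M] {A : Type*} (α : RActOn M A)
    (Z : Set M) (hZ : Submonoid.closure Z = ⊤)
    (X : Set A) (hX : ∀ a : A, ∃ x ∈ X, ∃ m : M, α.act x m = a)
    (B : Set A) (hB : IsSubact α B) :
    ∀ b ∈ B, ∃ u ∈ (X ∩ B) ∪ {c | c ∈ B ∧ ∃ a ∉ B, ∃ m ∈ Z, α.act a m = c},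
      ∃ m : M, α.act u m = b :=
  subact_generating_set_general α Z hZ X hX B
end

section
/- Let M be a finitely generated monoid, A a finitely generated M-act, and B a subact of A with A \ B finite. Then B is finitely generated. -/
/-!
Write an element `b ∈ B` as `u · z₁ ⋯ zₖ` with `u` a generator of `A` and the `zᵢ` generators
of `M`. If `u ∉ B`, the walk `u, u z₁, u z₁ z₂, …` enters `B` at some step, and it enters at an
element of the finite set `B ∩ (Bᶜ · Z)`, from which `b` is then reached.
-/

namespace RActOn

variable {M : Type*} [Monoid M] {A : Type*} (α : RActOn M A)

def entryPoints (B : Set A) (Z : Set M) : Set A :=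
  B ∩ Set.image2 α.act Bᶜ Z

theorem entryPoints_finite {B : Set A} {Z : Set M} (hB : Bᶜ.Finite) (hZ : Z.Finite) :
    (α.entryPoints B Z).Finite :=
  (hB.image2 α.act hZ).inter_of_right B

theorem mem_or_exists_entryPoints_act {B : Set A} {Z : Set M} {m : M}
    (hm : m ∈ Submonoid.closure Z) (a : A) (ha : α.act a m ∈ B) :
    a ∈ B ∨ ∃ w ∈ α.entryPoints B Z, ∃ n, α.act w n = α.act a m := by
  induction hm using Submonoid.closure_induction_left generalizing a with
  | one => exact .inl (α.act_one a ▸ ha)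
  | mul_left z hz m _ ih =>
    rw [α.act_mul] at ha ⊢
    rcases ih (α.act a z) ha with haz | hw
    · by_cases haB : a ∈ B
      · exact .inl haB
      · exact .inr ⟨α.act a z, ⟨haz, a, haB, z, hz, rfl⟩, m, rfl⟩
    · exact .inr hw

end RActOn

open RActOn in
theorem large_subact_fg_general {M : Type*} [Monoid M]
    (hM : ∃ Z : Set M, Z.Finite ∧ Submonoid.closure Z = ⊤)
    {A : Type*} (α : RActOn M A) (hA : FinitelyGenerated α)
    (B : Set A) (hlarge : (Bᶜ : Set A).Finite) :
    FGSet α B := by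
  obtain ⟨Z, hZ, hZtop⟩ := hM
  obtain ⟨U, hU, hUgen⟩ := hA
  refine ⟨U ∩ B ∪ α.entryPoints B Z,
    Set.union_subset Set.inter_subset_right Set.inter_subset_left,
    (hU.inter_of_left B).union (α.entryPoints_finite hlarge hZ), fun b hb => ?_⟩
  obtain ⟨u, hu, m, rfl⟩ := hUgen b
  have hm : m ∈ Submonoid.closure Z := hZtop ▸ Submonoid.mem_top m
  rcases α.mem_or_exists_entryPoints_act hm u hb with huB | ⟨w, hw, n, hwn⟩
  · exact ⟨u, .inl ⟨hu, huB⟩, m, rfl⟩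
  · exact ⟨w, .inr hw, n, hwn⟩

open RActOn in
/-- For a finitely generated monoid `M`, a large subact (finite complement) of a
finitely generated `M`-act is finitely generated. -/
theorem large_subact_fg {M : Type*} [Monoid M]
    (hM : ∃ Z : Set M, Z.Finite ∧ Submonoid.closure Z = ⊤)
    {A : Type*} (α : RActOn M A) (hA : FinitelyGenerated α)
    (B : Set A) (hB : IsSubact α B) (hlarge : (Bᶜ : Set A).Finite) :
    FGSet α B :=
  large_subact_fg_general hM α hA B hlarge
end
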